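/- arXiv:1506.08319 — 2 statements merged into one kernel-verified Lean document; each statement's English description precedes it below -/
import Mathlib

section
/- In a binary search tree, if x and z are elements with consecutive values (x < z and no element of the tree lies strictly between them), then one of x and z is an ancestor of the other. -/
inductive BTree (α : Type) where
  | leaf : BTree α
  | node : BTree α → α → BTree α → BTree α

def BTree.Mem {α : Type} : BTree α → α → Prop
  | .leaf, _ => False
  | .node l k r, x => x = k ∨ l.Mem x ∨ r.Mem x

def BTree.IsBST {α : Type} [LinearOrder α] : BTree α → Prop
  | .leaf => True
  | .node l k r =>
      (∀ x, l.Mem x → x < k) ∧ (∀ x, r.Mem x → k < x) ∧ l.IsBST ∧ r.IsBST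

inductive BTree.IsSubtree {α : Type} : BTree α → BTree α → Prop
  | refl (t : BTree α) : IsSubtree t t
  | left {s l r : BTree α} {k : α} : IsSubtree s l → IsSubtree s (.node l k r)
  | right {s l r : BTree α} {k : α} : IsSubtree s r → IsSubtree s (.node l k r)

/-- `x` is an ancestor of `z` in `T`: the subtree of `T` rooted at the node
with key `x` contains `z` (a node is an ancestor of itself). -/
def BTree.IsAncestor {α : Type} (T : BTree α) (x z : α) : Prop :=
  ∃ l r, BTree.IsSubtree (.node l x r) T ∧ (BTree.node l x r).Mem z

lemma BTree.IsAncestor.lift {α : Type} {s T : BTree α} {x z : α}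
    (h : s.IsAncestor x z) (hsub : s.IsSubtree T) : T.IsAncestor x z := by
  obtain ⟨l, r, h1, h2⟩ := h
  refine ⟨l, r, ?_, h2⟩
  induction hsub with
  | refl => exact h1
  | left _ ih => exact .left ih
  | right _ ih => exact .right ih

/-- In a BST, if `x < z` are consecutive values (no element of the tree lies
strictly between them), then one of them is an ancestor of the other. -/
theorem consecutive_values_ancestor {α : Type} [LinearOrder α]
    (T : BTree α) (hT : T.IsBST) (x z : α)
    (hx : T.Mem x) (hz : T.Mem z) (hxz : x < z)
    (hcons : ∀ y, T.Mem y → ¬(x < y ∧ y < z)) :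
    T.IsAncestor x z ∨ T.IsAncestor z x := by
  induction T with
  | leaf => exact absurd hx id
  | node l k r ihl ihr =>
    obtain ⟨hlk, hkr, hbl, hbr⟩ := hT
    rcases hx with hx | hx | hx
    · -- x = k, so z ≠ k, and z > x = k so z ∈ r
      subst hx
      rcases hz with hz | hz | hz
      · exact absurd hz hxz.ne'
      · exact absurd (hlk z hz) (not_lt.2 hxz.le)
      · exact Or.inl ⟨l, r, .refl _, Or.inr (Or.inr hz)⟩
    · rcases hz with hz | hz | hz
      · subst hz
        exact Or.inr ⟨l, r, .refl _, Or.inr (Or.inl hx)⟩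
      · -- both in l
        have := ihl hbl hx hz (fun y hy => hcons y (Or.inr (Or.inl hy)))
        rcases this with h | h
        · exact Or.inl (h.lift (.left (.refl _)))
        · exact Or.inr (h.lift (.left (.refl _)))
      · -- x in l, z in r: k strictly between, contradiction
        exact absurd ⟨hlk x hx, hkr z hz⟩ (hcons k (Or.inl rfl))
    · rcases hz with hz | hz | hz
      · subst hz; exact absurd (hkr x hx) (not_lt.2 hxz.le)
      · exact absurd (hxz.trans (hlk z hz)) (not_lt.2 (hkr x hx).le)
      · have := ihr hbr hx hz (fun y hy => hcons y (Or.inr (Or.inr hy)))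
        rcases this with h | h
        · exact Or.inl (h.lift (.right (.refl _)))
        · exact Or.inr (h.lift (.right (.refl _)))
end

section
/- There exists an absolute constant C such that any 0-1 matrix with m rows and n columns that avoids the 4×4 permutation pattern P₄ with 1-entries at positions (1,1),(2,3),(3,2),(4,4) has at most C·(m+n) ones. -/
/-- `M` avoids the 4×4 permutation pattern `P₄` with 1-entries at positions
(1,1), (2,3), (3,2), (4,4). -/
def AvoidsP4 {m n : ℕ} (M : Fin m → Fin n → Bool) : Prop :=
  ¬ ∃ (i₁ i₂ i₃ i₄ : Fin m) (j₁ j₂ j₃ j₄ : Fin n),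
      i₁ < i₂ ∧ i₂ < i₃ ∧ i₃ < i₄ ∧ j₁ < j₂ ∧ j₂ < j₃ ∧ j₃ < j₄ ∧
      M i₁ j₁ = true ∧ M i₂ j₃ = true ∧ M i₃ j₂ = true ∧ M i₄ j₄ = true

namespace P4Aux

open Finset

lemma four_elems {α : Type*} [LinearOrder α] {s : Finset α} (h : 4 ≤ s.card) :
    ∃ a b c d, a ∈ s ∧ b ∈ s ∧ c ∈ s ∧ d ∈ s ∧ a < b ∧ b < c ∧ c < d := by
  obtain ⟨t, hts, ht⟩ := Finset.exists_subset_card_eq h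
  let e := t.orderIsoOfFin ht
  refine ⟨e 0, e 1, e 2, e 3, hts (e 0).2, hts (e 1).2, hts (e 2).2, hts (e 3).2, ?_, ?_, ?_⟩
  · exact Subtype.coe_lt_coe.2 (e.strictMono (by decide : (0:Fin 4) < 1))
  · exact Subtype.coe_lt_coe.2 (e.strictMono (by decide : (1:Fin 4) < 2))
  · exact Subtype.coe_lt_coe.2 (e.strictMono (by decide : (2:Fin 4) < 3))

lemma lt_of_div_lt {a b : ℕ} (h : a / 32 < b / 32) : a < b := by
  by_contra h'
  exact absurd (Nat.div_le_div_right (not_lt.1 h')) (not_le.2 h)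

lemma lt_of_div_eq_mod_lt {a b : ℕ} (hd : a / 32 = b / 32) (hm : a % 32 < b % 32) : a < b := by
  have ha := Nat.div_add_mod a 32
  have hb := Nat.div_add_mod b 32
  omega

lemma div_lt_target {i m : ℕ} (h : i < m) : i / 32 < (m + 31) / 32 := by
  have h1 : 32 * (i / 32) ≤ i := Nat.mul_div_le i 32
  have : i / 32 + 1 ≤ (m + 31) / 32 := by
    rw [Nat.le_div_iff_mul_le (by norm_num : 0 < 32)]
    omega
  omega

variable {m n : ℕ} (M : Fin m → Fin n → Bool)

/-- The set of ones. -/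
def ones : Finset (Fin m × Fin n) := Finset.univ.filter fun p => M p.1 p.2 = true

/-- block index of a position -/
def bl (p : Fin m × Fin n) : Fin ((m + 31) / 32) × Fin ((n + 31) / 32) :=
  (⟨p.1.1 / 32, div_lt_target p.1.2⟩, ⟨p.2.1 / 32, div_lt_target p.2.2⟩)

/-- ones within block q -/
def S (q : Fin ((m + 31) / 32) × Fin ((n + 31) / 32)) : Finset (Fin m × Fin n) :=
  (ones M).filter fun p => bl p = q

def colset (q : Fin ((m + 31) / 32) × Fin ((n + 31) / 32)) : Finset ℕ :=
  (S M q).image fun p => p.2.1 % 32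

def rowset (q : Fin ((m + 31) / 32) × Fin ((n + 31) / 32)) : Finset ℕ :=
  (S M q).image fun p => p.1.1 % 32

lemma card_S_le (q : Fin ((m + 31) / 32) × Fin ((n + 31) / 32)) :
    (S M q).card ≤ (rowset M q).card * (colset M q).card := by
  have h := Finset.card_le_card_of_injOn (fun (p : Fin m × Fin n) => (p.1.1 % 32, p.2.1 % 32))
    (s := S M q) (t := (rowset M q) ×ˢ (colset M q)) ?_ ?_
  · simpa using h
  · intro p hp
    simp only [Finset.mem_coe, Finset.mem_product]
    exact ⟨Finset.mem_image_of_mem _ hp, Finset.mem_image_of_mem _ hp⟩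
  · intro p hp p' hp' hpe
    simp only [S, Finset.mem_coe, Finset.mem_filter] at hp hp'
    have hb : bl p = bl p' := hp.2.trans hp'.2.symm
    simp only [bl, Prod.mk.injEq, Fin.mk.injEq] at hb
    have h1 : (p.1.1 % 32, p.2.1 % 32) = (p'.1.1 % 32, p'.2.1 % 32) := hpe
    simp only [Prod.mk.injEq] at h1
    have e1 : p.1.1 = p'.1.1 := by omega
    have e2 : p.2.1 = p'.2.1 := by omega
    exact Prod.ext (Fin.ext e1) (Fin.ext e2)

lemma rowset_card_le (q) : (rowset M q).card ≤ 32 := by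
  have : rowset M q ⊆ Finset.range 32 := by
    intro x hx
    simp only [rowset, Finset.mem_image] at hx
    obtain ⟨p, _, rfl⟩ := hx
    exact Finset.mem_range.2 (Nat.mod_lt _ (by norm_num))
  simpa using Finset.card_le_card this

lemma colset_card_le (q) : (colset M q).card ≤ 32 := by
  have : colset M q ⊆ Finset.range 32 := by
    intro x hx
    simp only [colset, Finset.mem_image] at hx
    obtain ⟨p, _, rfl⟩ := hx
    exact Finset.mem_range.2 (Nat.mod_lt _ (by norm_num))
  simpa using Finset.card_le_card this

lemma card_S_le_1024 (q) : (S M q).card ≤ 1024 := by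
  have := card_S_le M q
  have h1 := rowset_card_le M q
  have h2 := colset_card_le M q
  calc (S M q).card ≤ (rowset M q).card * (colset M q).card := this
    _ ≤ 32 * 32 := Nat.mul_le_mul h1 h2
    _ = 1024 := by norm_num

lemma mem_S_props {q} {p : Fin m × Fin n} (hp : p ∈ S M q) :
    M p.1 p.2 = true ∧ p.1.1 / 32 = q.1.1 ∧ p.2.1 / 32 = q.2.1 := by
  simp only [S, ones, Finset.mem_filter, Finset.mem_univ, true_and] at hp
  obtain ⟨hM, hb⟩ := hp
  simp only [bl, Prod.ext_iff, Fin.ext_iff] at hb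
  exact ⟨hM, hb.1, hb.2⟩

/-- the contraction avoids P4 -/
lemma contraction_avoids (hM : AvoidsP4 M) :
    AvoidsP4 (fun (I : Fin ((m + 31) / 32)) (J : Fin ((n + 31) / 32)) =>
      decide (S M (I, J)).Nonempty) := by
  rintro ⟨I₁, I₂, I₃, I₄, J₁, J₂, J₃, J₄, h12, h23, h34, g12, g23, g34, e1, e2, e3, e4⟩
  rw [decide_eq_true_eq] at e1 e2 e3 e4
  obtain ⟨p₁, hp₁⟩ := e1
  obtain ⟨p₂, hp₂⟩ := e2
  obtain ⟨p₃, hp₃⟩ := e3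
  obtain ⟨p₄, hp₄⟩ := e4
  obtain ⟨m1, d1, c1⟩ := mem_S_props M hp₁
  obtain ⟨m2, d2, c2⟩ := mem_S_props M hp₂
  obtain ⟨m3, d3, c3⟩ := mem_S_props M hp₃
  obtain ⟨m4, d4, c4⟩ := mem_S_props M hp₄
  apply hM
  refine ⟨p₁.1, p₂.1, p₃.1, p₄.1, p₁.2, p₃.2, p₂.2, p₄.2, ?_, ?_, ?_, ?_, ?_, ?_, m1, m2, m3, m4⟩
  · exact lt_of_div_lt (by rw [d1, d2]; exact h12)
  · exact lt_of_div_lt (by rw [d2, d3]; exact h23)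
  · exact lt_of_div_lt (by rw [d3, d4]; exact h34)
  · exact lt_of_div_lt (by rw [c1, c3]; exact g12)
  · exact lt_of_div_lt (by rw [c3, c2]; exact g23)
  · exact lt_of_div_lt (by rw [c2, c4]; exact g34)

end P4Aux

namespace P4Aux
open Finset
variable {m n : ℕ} (M : Fin m → Fin n → Bool)

lemma mem_colset {q} {c : ℕ} (h : c ∈ colset M q) :
    ∃ p ∈ S M q, p.2.1 % 32 = c := by
  simpa [colset] using h

lemma mem_rowset {q} {c : ℕ} (h : c ∈ rowset M q) :
    ∃ p ∈ S M q, p.1.1 % 32 = c := by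
  simpa [rowset] using h

lemma wide_per_col (hM : AvoidsP4 M) (J : Fin ((n + 31) / 32)) :
    ((Finset.univ : Finset (Fin ((m + 31) / 32))).filter
      fun I => 4 ≤ (colset M (I, J)).card).card ≤ 107880 := by
  classical
  by_contra hc
  push_neg at hc
  set ws := (Finset.univ : Finset (Fin ((m + 31) / 32))).filter
      fun I => 4 ≤ (colset M (I, J)).card with hws
  let f : Fin ((m + 31) / 32) → Finset ℕ := fun I =>
    if h : 4 ≤ (colset M (I, J)).card then (Finset.exists_subset_card_eq h).choose else ∅
  have hfspec : ∀ I ∈ ws, f I ⊆ colset M (I, J) ∧ (f I).card = 4 := by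
    intro I hI
    rw [hws, Finset.mem_filter] at hI
    simp only [f, dif_pos hI.2]
    exact (Finset.exists_subset_card_eq hI.2).choose_spec
  have hmaps : ∀ I ∈ ws, f I ∈ Finset.powersetCard 4 (Finset.range 32) := by
    intro I hI
    rw [Finset.mem_powersetCard]
    refine ⟨?_, (hfspec I hI).2⟩
    refine (hfspec I hI).1.trans ?_
    intro x hx
    obtain ⟨p, _, rfl⟩ := mem_colset M hx
    exact Finset.mem_range.2 (Nat.mod_lt _ (by norm_num))
  have hcard : (Finset.powersetCard 4 (Finset.range 32)).card * 3 < ws.card := by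
    rw [Finset.card_powersetCard, Finset.card_range]
    have : Nat.choose 32 4 = 35960 := by norm_num [Nat.choose]
    omega
  obtain ⟨t₀, ht₀, hfib⟩ :=
    Finset.exists_lt_card_fiber_of_mul_lt_card_of_maps_to hmaps hcard
  rw [Finset.mem_powersetCard] at ht₀
  obtain ⟨I₁, I₂, I₃, I₄, hI₁, hI₂, hI₃, hI₄, o12, o23, o34⟩ :=
    four_elems (s := ws.filter fun I => f I = t₀) (by omega)
  obtain ⟨c₁, c₂, c₃, c₄, hc₁, hc₂, hc₃, hc₄, u12, u23, u34⟩ :=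
    four_elems (s := t₀) (by omega)
  have hsub : ∀ I ∈ ws.filter fun I => f I = t₀, ∀ c ∈ t₀, ∃ p ∈ S M (I, J), p.2.1 % 32 = c := by
    intro I hI c hcmem
    rw [Finset.mem_filter] at hI
    apply mem_colset
    exact (hfspec I hI.1).1 (hI.2 ▸ hcmem)
  obtain ⟨q₁, hq₁, hr₁⟩ := hsub I₁ hI₁ c₁ hc₁
  obtain ⟨q₂, hq₂, hr₂⟩ := hsub I₂ hI₂ c₃ hc₃
  obtain ⟨q₃, hq₃, hr₃⟩ := hsub I₃ hI₃ c₂ hc₂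
  obtain ⟨q₄, hq₄, hr₄⟩ := hsub I₄ hI₄ c₄ hc₄
  obtain ⟨m1, d1, e1⟩ := mem_S_props M hq₁
  obtain ⟨m2, d2, e2⟩ := mem_S_props M hq₂
  obtain ⟨m3, d3, e3⟩ := mem_S_props M hq₃
  obtain ⟨m4, d4, e4⟩ := mem_S_props M hq₄
  apply hM
  refine ⟨q₁.1, q₂.1, q₃.1, q₄.1, q₁.2, q₃.2, q₂.2, q₄.2, ?_, ?_, ?_, ?_, ?_, ?_, m1, m2, m3, m4⟩
  · exact lt_of_div_lt (by rw [d1, d2]; exact o12)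
  · exact lt_of_div_lt (by rw [d2, d3]; exact o23)
  · exact lt_of_div_lt (by rw [d3, d4]; exact o34)
  · exact lt_of_div_eq_mod_lt (by rw [e1, e3]) (by rw [hr₁, hr₃]; exact u12)
  · exact lt_of_div_eq_mod_lt (by rw [e3, e2]) (by rw [hr₃, hr₂]; exact u23)
  · exact lt_of_div_eq_mod_lt (by rw [e2, e4]) (by rw [hr₂, hr₄]; exact u34)

lemma tall_per_row (hM : AvoidsP4 M) (I : Fin ((m + 31) / 32)) :
    ((Finset.univ : Finset (Fin ((n + 31) / 32))).filter
      fun J => 4 ≤ (rowset M (I, J)).card).card ≤ 107880 := by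
  classical
  by_contra hc
  push_neg at hc
  set ws := (Finset.univ : Finset (Fin ((n + 31) / 32))).filter
      fun J => 4 ≤ (rowset M (I, J)).card with hws
  let f : Fin ((n + 31) / 32) → Finset ℕ := fun J =>
    if h : 4 ≤ (rowset M (I, J)).card then (Finset.exists_subset_card_eq h).choose else ∅
  have hfspec : ∀ J ∈ ws, f J ⊆ rowset M (I, J) ∧ (f J).card = 4 := by
    intro J hJ
    rw [hws, Finset.mem_filter] at hJ
    simp only [f, dif_pos hJ.2]
    exact (Finset.exists_subset_card_eq hJ.2).choose_spec
  have hmaps : ∀ J ∈ ws, f J ∈ Finset.powersetCard 4 (Finset.range 32) := by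
    intro J hJ
    rw [Finset.mem_powersetCard]
    refine ⟨?_, (hfspec J hJ).2⟩
    refine (hfspec J hJ).1.trans ?_
    intro x hx
    obtain ⟨p, _, rfl⟩ := mem_rowset M hx
    exact Finset.mem_range.2 (Nat.mod_lt _ (by norm_num))
  have hcard : (Finset.powersetCard 4 (Finset.range 32)).card * 3 < ws.card := by
    rw [Finset.card_powersetCard, Finset.card_range]
    have : Nat.choose 32 4 = 35960 := by norm_num [Nat.choose]
    omega
  obtain ⟨t₀, ht₀, hfib⟩ :=
    Finset.exists_lt_card_fiber_of_mul_lt_card_of_maps_to hmaps hcard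
  rw [Finset.mem_powersetCard] at ht₀
  obtain ⟨J₁, J₂, J₃, J₄, hJ₁, hJ₂, hJ₃, hJ₄, o12, o23, o34⟩ :=
    four_elems (s := ws.filter fun J => f J = t₀) (by omega)
  obtain ⟨c₁, c₂, c₃, c₄, hc₁, hc₂, hc₃, hc₄, u12, u23, u34⟩ :=
    four_elems (s := t₀) (by omega)
  have hsub : ∀ J ∈ ws.filter fun J => f J = t₀, ∀ c ∈ t₀,
      ∃ p ∈ S M (I, J), p.1.1 % 32 = c := by
    intro J hJ c hcmem
    rw [Finset.mem_filter] at hJ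
    apply mem_rowset
    exact (hfspec J hJ.1).1 (hJ.2 ▸ hcmem)
  obtain ⟨q₁, hq₁, hr₁⟩ := hsub J₁ hJ₁ c₁ hc₁
  obtain ⟨q₂, hq₂, hr₂⟩ := hsub J₂ hJ₂ c₃ hc₃
  obtain ⟨q₃, hq₃, hr₃⟩ := hsub J₃ hJ₃ c₂ hc₂
  obtain ⟨q₄, hq₄, hr₄⟩ := hsub J₄ hJ₄ c₄ hc₄
  obtain ⟨m1, d1, e1⟩ := mem_S_props M hq₁
  obtain ⟨m2, d2, e2⟩ := mem_S_props M hq₂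
  obtain ⟨m3, d3, e3⟩ := mem_S_props M hq₃
  obtain ⟨m4, d4, e4⟩ := mem_S_props M hq₄
  apply hM
  refine ⟨q₁.1, q₃.1, q₂.1, q₄.1, q₁.2, q₂.2, q₃.2, q₄.2, ?_, ?_, ?_, ?_, ?_, ?_, m1, m3, m2, m4⟩
  · exact lt_of_div_eq_mod_lt (by rw [d1, d3]) (by rw [hr₁, hr₃]; exact u12)
  · exact lt_of_div_eq_mod_lt (by rw [d3, d2]) (by rw [hr₃, hr₂]; exact u23)
  · exact lt_of_div_eq_mod_lt (by rw [d2, d4]) (by rw [hr₂, hr₄]; exact u34)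
  · exact lt_of_div_lt (by rw [e1, e2]; exact o12)
  · exact lt_of_div_lt (by rw [e2, e3]; exact o23)
  · exact lt_of_div_lt (by rw [e3, e4]; exact o34)

end P4Aux

namespace P4Aux
open Finset

theorem key : ∀ s m n, m + n ≤ s → ∀ (M : Fin m → Fin n → Bool), AvoidsP4 M →
    (Finset.univ.filter fun p : Fin m × Fin n => M p.1 p.2 = true).card ≤
      16000000 * (m + n) := by
  intro s
  induction s using Nat.strong_induction_on with
  | _ s ih =>
  intro m n hmn M hM
  classical
  by_cases hm : m ≤ 32
  · calc (Finset.univ.filter fun p : Fin m × Fin n => M p.1 p.2 = true).card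
        ≤ (Finset.univ : Finset (Fin m × Fin n)).card := Finset.card_le_card (Finset.filter_subset _ _)
      _ = m * n := by simp
      _ ≤ 16000000 * (m + n) := by nlinarith
  by_cases hn : n ≤ 32
  · calc (Finset.univ.filter fun p : Fin m × Fin n => M p.1 p.2 = true).card
        ≤ (Finset.univ : Finset (Fin m × Fin n)).card := Finset.card_le_card (Finset.filter_subset _ _)
      _ = m * n := by simp
      _ ≤ 16000000 * (m + n) := by nlinarith
  push_neg at hm hn
  -- block counts
  have hsum : (ones M).card = ∑ q ∈ (Finset.univ : Finset (Fin ((m + 31) / 32) × Fin ((n + 31) / 32))),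
      (S M q).card := by
    apply Finset.card_eq_sum_card_fiberwise (f := bl)
    intro x _; exact Finset.mem_univ _
  set U := (Finset.univ : Finset (Fin ((m + 31) / 32) × Fin ((n + 31) / 32))) with hU
  -- split the sum
  have hsplit : ∑ q ∈ U, (S M q).card =
      (∑ q ∈ U.filter (fun q => 4 ≤ (colset M q).card), (S M q).card) +
      (∑ q ∈ (U.filter (fun q => ¬ 4 ≤ (colset M q).card)).filter
          (fun q => 4 ≤ (rowset M q).card), (S M q).card) +
      (∑ q ∈ (U.filter (fun q => ¬ 4 ≤ (colset M q).card)).filter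
          (fun q => ¬ 4 ≤ (rowset M q).card), (S M q).card) := by
    rw [add_assoc, Finset.sum_filter_add_sum_filter_not, Finset.sum_filter_add_sum_filter_not]
  -- wide part
  have hwideCount : (U.filter (fun q => 4 ≤ (colset M q).card)).card ≤
      ((n + 31) / 32) * 107880 := by
    have hfib := Finset.card_eq_sum_card_fiberwise
      (f := fun q : Fin ((m + 31) / 32) × Fin ((n + 31) / 32) => q.2)
      (s := U.filter (fun q => 4 ≤ (colset M q).card))
      (t := (Finset.univ : Finset (Fin ((n + 31) / 32))))
      (fun x _ => Finset.mem_univ _)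
    rw [hfib]
    calc ∑ J ∈ (Finset.univ : Finset (Fin ((n + 31) / 32))),
          ((U.filter (fun q => 4 ≤ (colset M q).card)).filter (fun q => q.2 = J)).card
        ≤ ∑ J ∈ (Finset.univ : Finset (Fin ((n + 31) / 32))), 107880 := by
          apply Finset.sum_le_sum
          intro J _
          have hinj : (((U.filter (fun q => 4 ≤ (colset M q).card)).filter
              (fun q => q.2 = J))).card ≤
              ((Finset.univ : Finset (Fin ((m + 31) / 32))).filter
                (fun I => 4 ≤ (colset M (I, J)).card)).card := by
            apply Finset.card_le_card_of_injOn (fun q => q.1)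
            · intro q hq
              simp only [Finset.mem_coe, Finset.mem_filter] at hq ⊢
              obtain ⟨⟨_, hw⟩, h2⟩ := hq
              refine ⟨Finset.mem_univ _, ?_⟩
              have : (q.1, J) = q := by rw [← h2]
              rw [this]; exact hw
            · intro q hq q' hq' he
              simp only [Finset.mem_coe, Finset.mem_filter] at hq hq'
              exact Prod.ext he (hq.2.trans hq'.2.symm)
          exact hinj.trans (wide_per_col M hM J)
      _ = ((n + 31) / 32) * 107880 := by simp [mul_comm]
  have htallCount : ((U.filter (fun q => ¬ 4 ≤ (colset M q).card)).filter
      (fun q => 4 ≤ (rowset M q).card)).card ≤ ((m + 31) / 32) * 107880 := by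
    have hsub : ((U.filter (fun q => ¬ 4 ≤ (colset M q).card)).filter
        (fun q => 4 ≤ (rowset M q).card)) ⊆ U.filter (fun q => 4 ≤ (rowset M q).card) := by
      intro q hq
      simp only [Finset.mem_filter] at hq ⊢
      exact ⟨hq.1.1, hq.2⟩
    refine (Finset.card_le_card hsub).trans ?_
    have hfib := Finset.card_eq_sum_card_fiberwise
      (f := fun q : Fin ((m + 31) / 32) × Fin ((n + 31) / 32) => q.1)
      (s := U.filter (fun q => 4 ≤ (rowset M q).card))
      (t := (Finset.univ : Finset (Fin ((m + 31) / 32))))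
      (fun x _ => Finset.mem_univ _)
    rw [hfib]
    calc ∑ I ∈ (Finset.univ : Finset (Fin ((m + 31) / 32))),
          ((U.filter (fun q => 4 ≤ (rowset M q).card)).filter (fun q => q.1 = I)).card
        ≤ ∑ I ∈ (Finset.univ : Finset (Fin ((m + 31) / 32))), 107880 := by
          apply Finset.sum_le_sum
          intro I _
          have hinj : (((U.filter (fun q => 4 ≤ (rowset M q).card)).filter
              (fun q => q.1 = I))).card ≤
              ((Finset.univ : Finset (Fin ((n + 31) / 32))).filter
                (fun J => 4 ≤ (rowset M (I, J)).card)).card := by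
            apply Finset.card_le_card_of_injOn (fun q => q.2)
            · intro q hq
              simp only [Finset.mem_coe, Finset.mem_filter] at hq ⊢
              obtain ⟨⟨_, hw⟩, h2⟩ := hq
              refine ⟨Finset.mem_univ _, ?_⟩
              have : (I, q.2) = q := by rw [← h2]
              rw [this]; exact hw
            · intro q hq q' hq' he
              simp only [Finset.mem_coe, Finset.mem_filter] at hq hq'
              exact Prod.ext (hq.2.trans hq'.2.symm) he
          exact hinj.trans (tall_per_row M hM I)
      _ = ((m + 31) / 32) * 107880 := by simp [mul_comm]
  -- small blocks: bounded by 9 * number of nonempty blocks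
  have hsmall : (∑ q ∈ (U.filter (fun q => ¬ 4 ≤ (colset M q).card)).filter
      (fun q => ¬ 4 ≤ (rowset M q).card), (S M q).card) ≤
      9 * (U.filter (fun q => (S M q).Nonempty)).card := by
    calc (∑ q ∈ (U.filter (fun q => ¬ 4 ≤ (colset M q).card)).filter
        (fun q => ¬ 4 ≤ (rowset M q).card), (S M q).card)
        ≤ ∑ q ∈ (U.filter (fun q => ¬ 4 ≤ (colset M q).card)).filter
            (fun q => ¬ 4 ≤ (rowset M q).card), (if (S M q).Nonempty then 9 else 0) := by
          apply Finset.sum_le_sum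
          intro q hq
          simp only [Finset.mem_filter] at hq
          by_cases hne : (S M q).Nonempty
          · rw [if_pos hne]
            calc (S M q).card ≤ (rowset M q).card * (colset M q).card := card_S_le M q
              _ ≤ 3 * 3 := Nat.mul_le_mul (by omega) (by omega)
              _ = 9 := by norm_num
          · rw [if_neg hne, Finset.not_nonempty_iff_eq_empty.1 hne]
            simp
      _ ≤ ∑ q ∈ U, (if (S M q).Nonempty then 9 else 0) := by
          apply Finset.sum_le_sum_of_subset
          exact (Finset.filter_subset _ _).trans (Finset.filter_subset _ _)
      _ = 9 * (U.filter (fun q => (S M q).Nonempty)).card := by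
          rw [← Finset.sum_filter, Finset.sum_const, smul_eq_mul, mul_comm]
  -- number of nonempty blocks via induction hypothesis on the contraction
  have hcontr : (U.filter (fun q => (S M q).Nonempty)).card ≤
      16000000 * ((m + 31) / 32 + (n + 31) / 32) := by
    have hlt : (m + 31) / 32 + (n + 31) / 32 < s := by omega
    have happ := ih ((m + 31) / 32 + (n + 31) / 32) hlt ((m + 31) / 32) ((n + 31) / 32)
      (le_refl _) (fun I J => decide (S M (I, J)).Nonempty) (contraction_avoids M hM)
    refine le_trans (le_of_eq ?_) happ
    congr 1
    apply Finset.filter_congr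
    intro q _
    simp [Prod.mk.eta]
  -- put everything together
  have hA : (∑ q ∈ U.filter (fun q => 4 ≤ (colset M q).card), (S M q).card) ≤
      ((n + 31) / 32) * 107880 * 1024 := by
    calc (∑ q ∈ U.filter (fun q => 4 ≤ (colset M q).card), (S M q).card)
        ≤ ∑ q ∈ U.filter (fun q => 4 ≤ (colset M q).card), 1024 :=
          Finset.sum_le_sum (fun q _ => card_S_le_1024 M q)
      _ = (U.filter (fun q => 4 ≤ (colset M q).card)).card * 1024 := by
          rw [Finset.sum_const, smul_eq_mul]
      _ ≤ ((n + 31) / 32) * 107880 * 1024 := Nat.mul_le_mul_right _ hwideCount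
  have hB : (∑ q ∈ (U.filter (fun q => ¬ 4 ≤ (colset M q).card)).filter
      (fun q => 4 ≤ (rowset M q).card), (S M q).card) ≤
      ((m + 31) / 32) * 107880 * 1024 := by
    calc (∑ q ∈ (U.filter (fun q => ¬ 4 ≤ (colset M q).card)).filter
        (fun q => 4 ≤ (rowset M q).card), (S M q).card)
        ≤ ∑ q ∈ (U.filter (fun q => ¬ 4 ≤ (colset M q).card)).filter
            (fun q => 4 ≤ (rowset M q).card), 1024 :=
          Finset.sum_le_sum (fun q _ => card_S_le_1024 M q)
      _ = ((U.filter (fun q => ¬ 4 ≤ (colset M q).card)).filter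
            (fun q => 4 ≤ (rowset M q).card)).card * 1024 := by
          rw [Finset.sum_const, smul_eq_mul]
      _ ≤ ((m + 31) / 32) * 107880 * 1024 := Nat.mul_le_mul_right _ htallCount
  have honesEq : (Finset.univ.filter fun p : Fin m × Fin n => M p.1 p.2 = true).card =
      (ones M).card := rfl
  rw [honesEq, hsum, hsplit]
  have h16 : 16 * ((m + 31) / 32 + (n + 31) / 32) ≤ m + n := by omega
  calc (∑ q ∈ U.filter (fun q => 4 ≤ (colset M q).card), (S M q).card) +
      (∑ q ∈ (U.filter (fun q => ¬ 4 ≤ (colset M q).card)).filter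
          (fun q => 4 ≤ (rowset M q).card), (S M q).card) +
      (∑ q ∈ (U.filter (fun q => ¬ 4 ≤ (colset M q).card)).filter
          (fun q => ¬ 4 ≤ (rowset M q).card), (S M q).card)
      ≤ ((n + 31) / 32) * 107880 * 1024 + ((m + 31) / 32) * 107880 * 1024 +
        9 * (16000000 * ((m + 31) / 32 + (n + 31) / 32)) := by
        have := hsmall.trans (Nat.mul_le_mul_left 9 hcontr)
        omega
    _ ≤ ((m + 31) / 32 + (n + 31) / 32) * 254469120 := by ring_nf; omega
    _ ≤ 16000000 * (m + n) := by
        have h2 : ((m + 31) / 32 + (n + 31) / 32) * 254469120 ≤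
            ((m + 31) / 32 + (n + 31) / 32) * (16 * 16000000) := by
          apply Nat.mul_le_mul_left
          norm_num
        refine h2.trans ?_
        calc ((m + 31) / 32 + (n + 31) / 32) * (16 * 16000000) =
            (16 * ((m + 31) / 32 + (n + 31) / 32)) * 16000000 := by ring
          _ ≤ (m + n) * 16000000 := Nat.mul_le_mul_right _ h16
          _ = 16000000 * (m + n) := by ring

end P4Aux

/-- Any 0-1 matrix with `m` rows and `n` columns avoiding the pattern `P₄`
has at most `C * (m + n)` ones, for some absolute constant `C`. -/
theorem avoidsP4_linear_ones :
    ∃ C : ℕ, ∀ (m n : ℕ) (M : Fin m → Fin n → Bool), AvoidsP4 M →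
      (Finset.univ.filter fun p : Fin m × Fin n => M p.1 p.2 = true).card ≤
        C * (m + n) := by
  exact ⟨16000000, fun m n M hM => P4Aux.key (m + n) m n le_rfl M hM⟩
end
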